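/- Let (θ_{i,j})_{i,j≥1} be a coagulation kernel satisfying (K1) and (K3). Let f^{in} ∈ X_1^+, let (n_k) be a sequence of integers with n_k → ∞, and for each k let f^{n_k} be the nonnegative global solution of the truncated RBK system of size n_k with initial data f_i^{n_k}(0) = f_i^{in} for 1 ≤ i ≤ n_k. Suppose that for each i ≥ 1 and each t ≥ 0, f_i^{n_k}(t) → f_i(t) as k → ∞ for some functions f_i : [0,∞) → [0,∞). Then for every i ≥ 1 and every T ∈ (0,∞), the gain term converges: Σ_{j=1}^{n_k−i} θ_{i+j,j} f_{i+j}^{n_k} f_j^{n_k} → Σ_{j=1}^{∞} θ_{i+j,j} f_{i+j} f_j in L^1(0,T) as k → ∞. -/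

import Mathlib

/-!
The first moment `∑ₗ l fₗ` of a truncated solution is nonincreasing: its time derivative is
minus the dissipation `∑ₗ l (lossₗ - gainₗ)`, which by the symmetry of `θ` dominates
`∑_{p>q} 2q θ_{p,q} f_p f_q`, hence `∑ⱼ 2j θ_{i+j,j} f_{i+j} f_j` for each `i ≥ 1`. Integrating in
time, the `j`-th gain summands of all truncations have first moments in `j` bounded in `L¹(0,T)`
by `∑ₗ l fₗ^{in}`, and each `fⱼⁿ` is bounded by that constant. So the tails `j ≥ m` of the gain
series are `O(1/m)` in `L¹(0,T)` uniformly in `n`, and by Fatou also for the limit; the finitely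
many remaining summands converge by dominated convergence.
-/

open MeasureTheory Finset Filter

/-- `IsTruncRBKOn θ n I f` : the family `(f i)_{1 ≤ i ≤ n}` solves the truncated
Redner–Ben-Avraham–Kahng coagulation system of size `n` with kernel `θ` on the set `I`:
`df_i/dt = ∑_{j=1}^{n-i} θ_{i+j,j} f_{i+j} f_j − ∑_{j=1}^{n} θ_{i,j} f_i f_j`. -/
def IsTruncRBKOn (θ : ℕ → ℕ → ℝ) (n : ℕ) (I : Set ℝ) (f : ℕ → ℝ → ℝ) : Prop :=
  ∀ i ∈ Finset.Icc 1 n, ∀ t ∈ I,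
    HasDerivWithinAt (f i)
      ((∑ j ∈ Finset.Icc 1 (n - i), θ (i + j) j * f (i + j) t * f j t)
        - ∑ j ∈ Finset.Icc 1 n, θ i j * f i t * f j t) I t

open Topology ENNReal

theorem ENNReal.tsum_liminf_le_liminf_tsum (a : ℕ → ℕ → ℝ≥0∞) :
    ∑' j, liminf (fun k => a k j) atTop ≤ liminf (fun k => ∑' j, a k j) atTop := by
  simp only [← lintegral_count]
  exact lintegral_liminf_le' fun k => (measurable_of_countable _).aemeasurable

theorem ENNReal.natCast_mul_tsum_add_le (a : ℕ → ℝ≥0∞) (m : ℕ) :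
    (m : ℝ≥0∞) * ∑' j, a (j + m) ≤ ∑' j : ℕ, (j : ℝ≥0∞) * a j := by
  rw [← ENNReal.tsum_mul_left]
  calc ∑' j, (m : ℝ≥0∞) * a (j + m) ≤ ∑' j, ((j + m : ℕ) : ℝ≥0∞) * a (j + m) :=
        ENNReal.tsum_le_tsum fun j => by gcongr; omega
    _ ≤ _ := ENNReal.tsum_comp_le_tsum_of_injective (add_left_injective m)
        fun j : ℕ => (j : ℝ≥0∞) * a j

theorem summable_of_tsum_natCast_mul_ofReal_ne_top {a : ℕ → ℝ} (ha : ∀ j, 0 ≤ a j)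
    (h : ∑' j : ℕ, (j : ℝ≥0∞) * ENNReal.ofReal (a j) ≠ ∞) : Summable a := by
  rw [← summable_nat_add_iff 1]
  have htail : ∑' j, ENNReal.ofReal (a (j + 1)) ≠ ∞ := by
    refine ne_top_of_le_ne_top h ?_
    simpa using ENNReal.natCast_mul_tsum_add_le (fun j => ENNReal.ofReal (a j)) 1
  exact (ENNReal.summable_toReal htail).congr fun j => ENNReal.toReal_ofReal (ha _)

theorem ofReal_abs_tsum_sub_tsum_le {a b : ℕ → ℝ} (ha : Summable a) (hb : Summable b)
    (ha0 : ∀ j, 0 ≤ a j) (hb0 : ∀ j, 0 ≤ b j) (m : ℕ) :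
    ENNReal.ofReal |∑' j, a j - ∑' j, b j| ≤ ∑ j ∈ range m, ENNReal.ofReal |a j - b j|
      + ∑' j, ENNReal.ofReal (a (j + m)) + ∑' j, ENNReal.ofReal (b (j + m)) := by
  rw [← ha.sum_add_tsum_nat_add m, ← hb.sum_add_tsum_nat_add m,
    ← ENNReal.ofReal_tsum_of_nonneg (fun j => ha0 _) ((summable_nat_add_iff m).2 ha),
    ← ENNReal.ofReal_tsum_of_nonneg (fun j => hb0 _) ((summable_nat_add_iff m).2 hb),
    ← ENNReal.ofReal_sum_of_nonneg fun j _ => abs_nonneg _]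
  refine (ENNReal.ofReal_le_ofReal ?_).trans
    (ENNReal.ofReal_add_le.trans (add_le_add_left ENNReal.ofReal_add_le _))
  have hhead := Finset.abs_sum_le_sum_abs (fun j => a j - b j) (range m)
  rw [sum_sub_distrib] at hhead
  have hta : 0 ≤ ∑' j, a (j + m) := tsum_nonneg fun j => ha0 (j + m)
  have htb : 0 ≤ ∑' j, b (j + m) := tsum_nonneg fun j => hb0 (j + m)
  rw [abs_le] at hhead ⊢
  constructor <;> linarith

section SeriesOfFunctions

variable {α : Type*} [MeasurableSpace α] {μ : Measure α}

theorem lintegral_tsum_le_liminf_of_tendsto {φ : ℕ → ℕ → α → ℝ≥0∞} {Φ : ℕ → α → ℝ≥0∞}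
    (hφ : ∀ k j, AEMeasurable (φ k j) μ)
    (hlim : ∀ j, ∀ᵐ x ∂μ, Tendsto (fun k => φ k j x) atTop (𝓝 (Φ j x))) :
    ∫⁻ x, ∑' j, Φ j x ∂μ ≤ liminf (fun k => ∫⁻ x, ∑' j, φ k j x ∂μ) atTop :=
  calc ∫⁻ x, ∑' j, Φ j x ∂μ = ∫⁻ x, ∑' j, liminf (fun k => φ k j x) atTop ∂μ := by
        refine lintegral_congr_ae ?_
        filter_upwards [ae_all_iff.2 hlim] with x hx
        exact tsum_congr fun j => (hx j).liminf_eq.symm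
    _ ≤ ∫⁻ x, liminf (fun k => ∑' j, φ k j x) atTop ∂μ :=
        lintegral_mono fun x => ENNReal.tsum_liminf_le_liminf_tsum _
    _ ≤ _ := lintegral_liminf_le' fun k => AEMeasurable.tsum (hφ k)

theorem ENNReal.tendsto_nhds_zero_of_le_add {ι : Type*} {l : Filter ι} {u : ι → ℝ≥0∞}
    {h : ℕ → ι → ℝ≥0∞} {v : ℕ → ℝ≥0∞} (huhv : ∀ m k, u k ≤ h m k + v m)
    (hh : ∀ m, Tendsto (h m) l (𝓝 0)) (hv : Tendsto v atTop (𝓝 0)) : Tendsto u l (𝓝 0) := by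
  refine ENNReal.tendsto_nhds_zero.2 fun ε hε => ?_
  obtain ⟨m, hm⟩ := (ENNReal.tendsto_nhds_zero.1 hv (ε / 2) (ENNReal.half_pos hε.ne')).exists
  filter_upwards [ENNReal.tendsto_nhds_zero.1 (hh m) (ε / 2) (ENNReal.half_pos hε.ne')] with k hk
  exact (huhv m k).trans ((add_le_add hk hm).trans_eq (ENNReal.add_halves ε))

theorem lintegral_tsum_add_le_div (a : ℕ → α → ℝ≥0∞) {C : ℝ≥0∞}
    (hC : ∫⁻ x, ∑' j : ℕ, (j : ℝ≥0∞) * a j x ∂μ ≤ C) {m : ℕ} (hm : m ≠ 0) :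
    ∫⁻ x, ∑' j, a (j + m) x ∂μ ≤ C / m := by
  rw [ENNReal.le_div_iff_mul_le (Or.inl (Nat.cast_ne_zero.2 hm)) (Or.inl (natCast_ne_top m)),
    mul_comm, ← lintegral_const_mul' _ _ (natCast_ne_top m)]
  exact (lintegral_mono fun x => ENNReal.natCast_mul_tsum_add_le _ m).trans hC

theorem ae_summable_of_lintegral_moment_ne_top {a : ℕ → α → ℝ}
    (ha_meas : ∀ j, AEMeasurable (a j) μ) (ha0 : ∀ j, ∀ᵐ x ∂μ, 0 ≤ a j x)
    (h : ∫⁻ x, ∑' j : ℕ, (j : ℝ≥0∞) * ENNReal.ofReal (a j x) ∂μ ≠ ∞) :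
    ∀ᵐ x ∂μ, Summable fun j => a j x := by
  have hmeas : AEMeasurable (fun x => ∑' j : ℕ, (j : ℝ≥0∞) * ENNReal.ofReal (a j x)) μ :=
    AEMeasurable.tsum fun j => aemeasurable_const.mul (ha_meas j).ennreal_ofReal
  filter_upwards [ae_lt_top' hmeas h, ae_all_iff.2 ha0] with x hx hx0
  exact summable_of_tsum_natCast_mul_ofReal_ne_top hx0 hx.ne

theorem tendsto_lintegral_ofReal_abs_sub [IsFiniteMeasure μ] {g : ℕ → α → ℝ} {G : α → ℝ} {b : ℝ}
    (hg_meas : ∀ k, AEStronglyMeasurable (g k) μ) (hg_nonneg : ∀ k, ∀ᵐ x ∂μ, 0 ≤ g k x)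
    (hg_le : ∀ k, ∀ᵐ x ∂μ, g k x ≤ b)
    (hg_lim : ∀ᵐ x ∂μ, Tendsto (fun k => g k x) atTop (𝓝 (G x))) :
    Tendsto (fun k => ∫⁻ x, ENNReal.ofReal |g k x - G x| ∂μ) atTop (𝓝 0) := by
  have hG_meas : AEStronglyMeasurable G μ := aestronglyMeasurable_of_tendsto_ae _ hg_meas hg_lim
  have hG_mem : ∀ᵐ x ∂μ, 0 ≤ G x ∧ G x ≤ b := by
    filter_upwards [hg_lim, ae_all_iff.2 hg_nonneg, ae_all_iff.2 hg_le] with x hx hx0 hxb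
    exact ⟨ge_of_tendsto' hx hx0, le_of_tendsto' hx hxb⟩
  have hdom := tendsto_lintegral_of_dominated_convergence' (μ := μ) (f := fun _ => 0)
    (fun _ => ENNReal.ofReal b)
    (fun k => (continuous_abs.comp_aestronglyMeasurable
      ((hg_meas k).sub hG_meas)).aemeasurable.ennreal_ofReal)
    (fun k => by
      filter_upwards [hg_nonneg k, hg_le k, hG_mem] with x h0 hb hG
      exact ENNReal.ofReal_le_ofReal (abs_sub_le_of_nonneg_of_le h0 hb hG.1 hG.2))
    (by simpa using ENNReal.mul_ne_top ofReal_ne_top (measure_ne_top μ Set.univ))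
    (by
      filter_upwards [hg_lim] with x hx
      simpa using ENNReal.tendsto_ofReal (hx.sub_const (G x)).abs)
  simpa using hdom

theorem lintegral_moment_le_of_tendsto {g : ℕ → ℕ → α → ℝ} {G : ℕ → α → ℝ} {C : ℝ≥0∞}
    (hg_meas : ∀ k j, AEMeasurable (g k j) μ)
    (hg_lim : ∀ j, ∀ᵐ x ∂μ, Tendsto (fun k => g k j x) atTop (𝓝 (G j x)))
    (hg_moment : ∀ k, ∫⁻ x, ∑' j : ℕ, (j : ℝ≥0∞) * ENNReal.ofReal (g k j x) ∂μ ≤ C) :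
    ∫⁻ x, ∑' j : ℕ, (j : ℝ≥0∞) * ENNReal.ofReal (G j x) ∂μ ≤ C := by
  refine (lintegral_tsum_le_liminf_of_tendsto (fun k j => ?_) fun j => ?_).trans
    (liminf_le_of_frequently_le' (Frequently.of_forall hg_moment))
  · exact aemeasurable_const.mul (hg_meas k j).ennreal_ofReal
  · filter_upwards [hg_lim j] with x hx
    exact ENNReal.Tendsto.const_mul (ENNReal.tendsto_ofReal hx) (Or.inr (natCast_ne_top j))

theorem lintegral_ofReal_abs_tsum_sub_tsum_le {a b : ℕ → α → ℝ} {C : ℝ≥0∞} (hC : C ≠ ∞)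
    (ha_meas : ∀ j, AEStronglyMeasurable (a j) μ) (hb_meas : ∀ j, AEStronglyMeasurable (b j) μ)
    (ha0 : ∀ j, ∀ᵐ x ∂μ, 0 ≤ a j x) (hb0 : ∀ j, ∀ᵐ x ∂μ, 0 ≤ b j x)
    (ha_moment : ∫⁻ x, ∑' j : ℕ, (j : ℝ≥0∞) * ENNReal.ofReal (a j x) ∂μ ≤ C)
    (hb_moment : ∫⁻ x, ∑' j : ℕ, (j : ℝ≥0∞) * ENNReal.ofReal (b j x) ∂μ ≤ C)
    {m : ℕ} (hm : m ≠ 0) :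
    ∫⁻ x, ENNReal.ofReal |∑' j, a j x - ∑' j, b j x| ∂μ
      ≤ ∑ j ∈ range m, ∫⁻ x, ENNReal.ofReal |a j x - b j x| ∂μ + (C / m + C / m) := by
  have hhead : ∀ j, AEMeasurable (fun x => ENNReal.ofReal |a j x - b j x|) μ := fun j =>
    (continuous_abs.comp_aestronglyMeasurable
      ((ha_meas j).sub (hb_meas j))).aemeasurable.ennreal_ofReal
  have hsum : AEMeasurable (fun x => ∑ j ∈ range m, ENNReal.ofReal |a j x - b j x|) μ :=
    Finset.aemeasurable_fun_sum _ fun j _ => hhead j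
  have htail : AEMeasurable (fun x => ∑' j, ENNReal.ofReal (a (j + m) x)) μ :=
    AEMeasurable.tsum fun j => (ha_meas _).aemeasurable.ennreal_ofReal
  have hsplit : ∀ᵐ x ∂μ, ENNReal.ofReal |∑' j, a j x - ∑' j, b j x| ≤
      ∑ j ∈ range m, ENNReal.ofReal |a j x - b j x|
        + ∑' j, ENNReal.ofReal (a (j + m) x) + ∑' j, ENNReal.ofReal (b (j + m) x) := by
    filter_upwards [ae_summable_of_lintegral_moment_ne_top (fun j => (ha_meas j).aemeasurable)
        ha0 (ne_top_of_le_ne_top hC ha_moment),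
      ae_summable_of_lintegral_moment_ne_top (fun j => (hb_meas j).aemeasurable)
        hb0 (ne_top_of_le_ne_top hC hb_moment),
      ae_all_iff.2 ha0, ae_all_iff.2 hb0] with x hax hbx hax0 hbx0
    exact ofReal_abs_tsum_sub_tsum_le hax hbx hax0 hbx0 m
  calc _ ≤ _ := lintegral_mono_ae hsplit
    _ = ∑ j ∈ range m, ∫⁻ x, ENNReal.ofReal |a j x - b j x| ∂μ
          + (∫⁻ x, ∑' j, ENNReal.ofReal (a (j + m) x) ∂μ
            + ∫⁻ x, ∑' j, ENNReal.ofReal (b (j + m) x) ∂μ) := by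
        rw [lintegral_add_left' (hsum.fun_add htail), lintegral_add_left' hsum,
          lintegral_finsetSum' _ fun j _ => hhead j, add_assoc]
    _ ≤ _ := by
        gcongr
        · exact lintegral_tsum_add_le_div _ ha_moment hm
        · exact lintegral_tsum_add_le_div _ hb_moment hm

theorem tendsto_integral_abs_tsum_sub_tsum [IsFiniteMeasure μ] {g : ℕ → ℕ → α → ℝ}
    {G : ℕ → α → ℝ} {C : ℝ≥0∞} (hC : C ≠ ∞)
    (hg_meas : ∀ k j, AEStronglyMeasurable (g k j) μ)
    (hg_nonneg : ∀ k j, ∀ᵐ x ∂μ, 0 ≤ g k j x)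
    (hg_bdd : ∀ j, ∃ b, ∀ k, ∀ᵐ x ∂μ, g k j x ≤ b)
    (hg_lim : ∀ j, ∀ᵐ x ∂μ, Tendsto (fun k => g k j x) atTop (𝓝 (G j x)))
    (hg_moment : ∀ k, ∫⁻ x, ∑' j : ℕ, (j : ℝ≥0∞) * ENNReal.ofReal (g k j x) ∂μ ≤ C) :
    Tendsto (fun k => ∫ x, |∑' j, g k j x - ∑' j, G j x| ∂μ) atTop (𝓝 0) := by
  have hG_meas : ∀ j, AEStronglyMeasurable (G j) μ := fun j =>
    aestronglyMeasurable_of_tendsto_ae _ (fun k => hg_meas k j) (hg_lim j)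
  have hG_nonneg : ∀ j, ∀ᵐ x ∂μ, 0 ≤ G j x := fun j => by
    filter_upwards [hg_lim j, ae_all_iff.2 fun k => hg_nonneg k j] with x hx hx0
    exact ge_of_tendsto' hx hx0
  have hG_moment := lintegral_moment_le_of_tendsto (fun k j => (hg_meas k j).aemeasurable)
    hg_lim hg_moment
  have hhead : ∀ j, Tendsto (fun k => ∫⁻ x, ENNReal.ofReal |g k j x - G j x| ∂μ) atTop (𝓝 0) :=
    fun j => by
      obtain ⟨b, hb⟩ := hg_bdd j
      exact tendsto_lintegral_ofReal_abs_sub (fun k => hg_meas k j) (fun k => hg_nonneg k j) hb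
        (hg_lim j)
  have hdiv : Tendsto (fun m : ℕ => C / ((m + 1 : ℕ) : ℝ≥0∞)) atTop (𝓝 0) := by
    simpa using ENNReal.Tendsto.const_div
      (ENNReal.tendsto_nat_nhds_top.comp (tendsto_add_atTop_nat 1)) (Or.inr hC)
  have hENN : Tendsto (fun k => ∫⁻ x, ENNReal.ofReal |∑' j, g k j x - ∑' j, G j x| ∂μ)
      atTop (𝓝 0) := by
    refine ENNReal.tendsto_nhds_zero_of_le_add
      (v := fun m : ℕ => C / ((m + 1 : ℕ) : ℝ≥0∞) + C / ((m + 1 : ℕ) : ℝ≥0∞))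
      (fun m k => lintegral_ofReal_abs_tsum_sub_tsum_le hC (hg_meas k) hG_meas (hg_nonneg k)
        hG_nonneg (hg_moment k) hG_moment m.add_one_ne_zero) (fun m => ?_) ?_
    · simpa using tendsto_finsetSum (range (m + 1)) fun j _ => hhead j
    · simpa only [add_zero] using hdiv.add hdiv
  have hint : ∀ k, ∫ x, |∑' j, g k j x - ∑' j, G j x| ∂μ
      = (∫⁻ x, ENNReal.ofReal |∑' j, g k j x - ∑' j, G j x| ∂μ).toReal := fun k =>
    integral_eq_lintegral_of_nonneg_ae (ae_of_all _ fun x => abs_nonneg _)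
      (continuous_abs.comp_aestronglyMeasurable
        ((AEStronglyMeasurable.tsum (hg_meas k)).sub (AEStronglyMeasurable.tsum hG_meas)))
  simp_rw [hint]
  exact (ENNReal.tendsto_toReal zero_ne_top).comp hENN

end SeriesOfFunctions

def strictLowerPairs (n : ℕ) : Finset (ℕ × ℕ) :=
  (Icc 1 n ×ˢ Icc 1 n).filter fun p => p.2 < p.1

theorem mem_strictLowerPairs {n : ℕ} {p : ℕ × ℕ} :
    p ∈ strictLowerPairs n ↔ 1 ≤ p.2 ∧ p.2 < p.1 ∧ p.1 ≤ n := by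
  simp only [strictLowerPairs, mem_filter, mem_product, mem_Icc]
  omega

theorem mem_Icc_of_mem_strictLowerPairs {n : ℕ} {p : ℕ × ℕ} (hp : p ∈ strictLowerPairs n) :
    p.1 ∈ Icc 1 n ∧ p.2 ∈ Icc 1 n := by
  rw [mem_strictLowerPairs] at hp
  simp only [mem_Icc]
  omega

section WeightedPairSums

variable (w : ℕ → ℕ → ℝ) (n : ℕ)

theorem sum_natCast_mul_sum_shift_eq :
    ∑ l ∈ Icc 1 n, (l : ℝ) * ∑ j ∈ Icc 1 (n - l), w (l + j) j
      = ∑ p ∈ strictLowerPairs n, ((p.1 : ℝ) - p.2) * w p.1 p.2 := by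
  simp_rw [mul_sum]
  rw [sum_sigma']
  refine sum_nbij' (fun a => (a.1 + a.2, a.2)) (fun p => ⟨p.1 - p.2, p.2⟩) ?_ ?_ ?_ ?_ ?_
  · intro a ha
    simp only [mem_sigma, mem_Icc] at ha
    simp only [mem_strictLowerPairs]
    omega
  · intro p hp
    simp only [mem_strictLowerPairs] at hp
    simp only [mem_sigma, mem_Icc]
    omega
  · intro a _
    simp
  · intro p hp
    simp only [mem_strictLowerPairs] at hp
    ext
    · simp only; omega
    · rfl
  · intro a _
    push_cast
    ring

variable {w n}

theorem sum_strictLowerPairs_add_mul_le (hw_symm : ∀ l ∈ Icc 1 n, ∀ j ∈ Icc 1 n, w l j = w j l)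
    (hw0 : ∀ l ∈ Icc 1 n, ∀ j ∈ Icc 1 n, 0 ≤ w l j) :
    ∑ p ∈ strictLowerPairs n, ((p.1 : ℝ) + p.2) * w p.1 p.2
      ≤ ∑ l ∈ Icc 1 n, (l : ℝ) * ∑ j ∈ Icc 1 n, w l j := by
  set swap := (Equiv.prodComm ℕ ℕ).toEmbedding
  have hmirror : ∑ p ∈ strictLowerPairs n, (p.2 : ℝ) * w p.1 p.2
      = ∑ p ∈ (strictLowerPairs n).map swap, (p.1 : ℝ) * w p.1 p.2 := by
    rw [sum_map]
    refine sum_congr rfl fun p hp => ?_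
    rw [mem_strictLowerPairs] at hp
    simp only [swap, Equiv.coe_toEmbedding, Equiv.prodComm_apply, Prod.fst_swap, Prod.snd_swap]
    rw [hw_symm _ (mem_Icc.2 ⟨by omega, by omega⟩) _ (mem_Icc.2 ⟨by omega, by omega⟩)]
  have hdisj : Disjoint (strictLowerPairs n) ((strictLowerPairs n).map swap) := by
    simp only [disjoint_left, Finset.mem_map, mem_strictLowerPairs]
    rintro p hp ⟨q, hq, rfl⟩
    simp only [swap, Equiv.coe_toEmbedding, Equiv.prodComm_apply, Prod.fst_swap,
      Prod.snd_swap] at hp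
    omega
  have hsub : strictLowerPairs n ∪ (strictLowerPairs n).map swap ⊆ Icc 1 n ×ˢ Icc 1 n := by
    simp only [union_subset_iff]
    exact ⟨filter_subset _ _, fun p hp => by
      obtain ⟨q, hq, rfl⟩ := Finset.mem_map.1 hp
      simp only [mem_strictLowerPairs] at hq
      simp only [swap, Equiv.coe_toEmbedding, Equiv.prodComm_apply, Prod.fst_swap,
        Prod.snd_swap, mem_product, mem_Icc]
      omega⟩
  calc ∑ p ∈ strictLowerPairs n, ((p.1 : ℝ) + p.2) * w p.1 p.2
      = ∑ p ∈ strictLowerPairs n ∪ (strictLowerPairs n).map swap, (p.1 : ℝ) * w p.1 p.2 := by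
        rw [sum_union hdisj, ← hmirror, ← sum_add_distrib]
        exact sum_congr rfl fun p _ => by ring
    _ ≤ ∑ p ∈ Icc 1 n ×ˢ Icc 1 n, (p.1 : ℝ) * w p.1 p.2 := by
        refine sum_le_sum_of_subset_of_nonneg hsub fun p hp _ => ?_
        rw [mem_product] at hp
        exact mul_nonneg (Nat.cast_nonneg _) (hw0 _ hp.1 _ hp.2)
    _ = ∑ l ∈ Icc 1 n, (l : ℝ) * ∑ j ∈ Icc 1 n, w l j := by
        rw [sum_product]
        simp_rw [mul_sum]

theorem sum_strictLowerPairs_two_mul_le (hw_symm : ∀ l ∈ Icc 1 n, ∀ j ∈ Icc 1 n, w l j = w j l)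
    (hw0 : ∀ l ∈ Icc 1 n, ∀ j ∈ Icc 1 n, 0 ≤ w l j) :
    ∑ p ∈ strictLowerPairs n, 2 * (p.2 : ℝ) * w p.1 p.2
      ≤ ∑ l ∈ Icc 1 n, (l : ℝ) *
          ((∑ j ∈ Icc 1 n, w l j) - ∑ j ∈ Icc 1 (n - l), w (l + j) j) := by
  have hloss := sum_strictLowerPairs_add_mul_le hw_symm hw0
  have hgain := sum_natCast_mul_sum_shift_eq w n
  simp_rw [mul_sub, sum_sub_distrib]
  calc ∑ p ∈ strictLowerPairs n, 2 * (p.2 : ℝ) * w p.1 p.2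
      = ∑ p ∈ strictLowerPairs n, ((p.1 : ℝ) + p.2) * w p.1 p.2
        - ∑ p ∈ strictLowerPairs n, ((p.1 : ℝ) - p.2) * w p.1 p.2 := by
        rw [← sum_sub_distrib]
        exact sum_congr rfl fun p _ => by ring
    _ ≤ _ := by linarith

theorem sum_shift_le_sum_strictLowerPairs (hw0 : ∀ l ∈ Icc 1 n, ∀ j ∈ Icc 1 n, 0 ≤ w l j)
    {i : ℕ} (hi : 1 ≤ i) :
    ∑ j ∈ Icc 1 (n - i), 2 * (j : ℝ) * w (i + j) j
      ≤ ∑ p ∈ strictLowerPairs n, 2 * (p.2 : ℝ) * w p.1 p.2 := by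
  have hinj : Set.InjOn (fun j => (i + j, j)) (Icc 1 (n - i)) := fun a _ b _ h =>
    congrArg Prod.snd h
  rw [← sum_image (f := fun p : ℕ × ℕ => 2 * (p.2 : ℝ) * w p.1 p.2) hinj]
  refine sum_le_sum_of_subset_of_nonneg (fun p hp => ?_) fun p hp _ =>
    mul_nonneg (by positivity) (hw0 _ (mem_Icc_of_mem_strictLowerPairs hp).1 _
      (mem_Icc_of_mem_strictLowerPairs hp).2)
  obtain ⟨j, hj, rfl⟩ := mem_image.1 hp
  rw [mem_Icc] at hj
  rw [mem_strictLowerPairs]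
  omega

end WeightedPairSums

def rbkMass (n : ℕ) (u : ℕ → ℝ) : ℝ :=
  ∑ l ∈ Icc 1 n, (l : ℝ) * u l

def rbkDissipation (θ : ℕ → ℕ → ℝ) (n : ℕ) (u : ℕ → ℝ) : ℝ :=
  ∑ l ∈ Icc 1 n, (l : ℝ) *
    ((∑ j ∈ Icc 1 n, θ l j * u l * u j) - ∑ j ∈ Icc 1 (n - l), θ (l + j) j * u (l + j) * u j)

/-- Makes the truncated gain term a series in `j`, like the limiting one (`tsum_gainSummand`). -/
def gainSummand (θ : ℕ → ℕ → ℝ) (n i : ℕ) (u : ℕ → ℝ) (j : ℕ) : ℝ :=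
  if j ∈ Icc 1 (n - i) then θ (i + j) j * u (i + j) * u j else 0

section Moments

variable {θ : ℕ → ℕ → ℝ} {n : ℕ} {u : ℕ → ℝ}

theorem le_rbkMass (hu : ∀ j ∈ Icc 1 n, 0 ≤ u j) {j : ℕ} (hj : j ∈ Icc 1 n) :
    u j ≤ rbkMass n u := by
  have hj1 : (1 : ℝ) ≤ j := by exact_mod_cast (mem_Icc.1 hj).1
  calc u j ≤ (j : ℝ) * u j := le_mul_of_one_le_left (hu j hj) hj1
    _ ≤ rbkMass n u := single_le_sum (f := fun l : ℕ => (l : ℝ) * u l)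
        (fun l hl => mul_nonneg (Nat.cast_nonneg l) (hu l hl)) hj

theorem rbkMass_nonneg (hu : ∀ j ∈ Icc 1 n, 0 ≤ u j) : 0 ≤ rbkMass n u :=
  sum_nonneg fun l hl => mul_nonneg (Nat.cast_nonneg l) (hu l hl)

theorem rbkMass_le_tsum {v : ℕ → ℝ} (huv : ∀ j ∈ Icc 1 n, u j = v j)
    (hv0 : ∀ j : ℕ, 1 ≤ j → 0 ≤ v j) (hv : Summable fun j : ℕ => (j : ℝ) * v j) :
    rbkMass n u ≤ ∑' j : ℕ, (j : ℝ) * v j := by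
  rw [rbkMass, sum_congr rfl fun j hj => by rw [huv j hj]]
  refine hv.sum_le_tsum _ fun j _ => ?_
  rcases Nat.eq_zero_or_pos j with rfl | hj
  · simp
  · exact mul_nonneg (Nat.cast_nonneg j) (hv0 j hj)

theorem kernel_mul_nonneg (hθ0 : ∀ i j : ℕ, 1 ≤ i → 1 ≤ j → 0 ≤ θ i j)
    (hu : ∀ j ∈ Icc 1 n, 0 ≤ u j) : ∀ l ∈ Icc 1 n, ∀ j ∈ Icc 1 n, 0 ≤ θ l j * u l * u j :=
  fun l hl j hj =>
    mul_nonneg (mul_nonneg (hθ0 l j (mem_Icc.1 hl).1 (mem_Icc.1 hj).1) (hu l hl)) (hu j hj)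

theorem sum_strictLowerPairs_le_rbkDissipation
    (hθ_symm : ∀ i j : ℕ, 1 ≤ i → 1 ≤ j → θ i j = θ j i)
    (hθ0 : ∀ i j : ℕ, 1 ≤ i → 1 ≤ j → 0 ≤ θ i j) (hu : ∀ j ∈ Icc 1 n, 0 ≤ u j) :
    ∑ p ∈ strictLowerPairs n, 2 * (p.2 : ℝ) * (θ p.1 p.2 * u p.1 * u p.2)
      ≤ rbkDissipation θ n u := by
  refine sum_strictLowerPairs_two_mul_le (w := fun l j => θ l j * u l * u j)
    (fun l hl j hj => ?_) (kernel_mul_nonneg hθ0 hu)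
  rw [hθ_symm l j (mem_Icc.1 hl).1 (mem_Icc.1 hj).1]
  ring

theorem gainSummand_eq_of_mem {i j : ℕ} (hj : j ∈ Icc 1 (n - i)) :
    gainSummand θ n i u j = θ (i + j) j * u (i + j) * u j :=
  if_pos hj

theorem gainSummand_eq_zero_of_notMem {i j : ℕ} (hj : j ∉ Icc 1 (n - i)) :
    gainSummand θ n i u j = 0 :=
  if_neg hj

theorem tsum_gainSummand (i : ℕ) :
    ∑' j, gainSummand θ n i u j = ∑ j ∈ Icc 1 (n - i), θ (i + j) j * u (i + j) * u j := by
  rw [tsum_eq_sum fun j hj => gainSummand_eq_zero_of_notMem hj]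
  exact sum_congr rfl fun j hj => gainSummand_eq_of_mem hj

theorem mem_Icc_add_of_mem_Icc_sub {i j : ℕ} (hj : j ∈ Icc 1 (n - i)) :
    i + j ∈ Icc 1 n ∧ j ∈ Icc 1 n := by
  simp only [mem_Icc] at hj ⊢
  omega

theorem gainSummand_nonneg (hθ0 : ∀ i j : ℕ, 1 ≤ i → 1 ≤ j → 0 ≤ θ i j)
    (hu : ∀ j ∈ Icc 1 n, 0 ≤ u j) (i j : ℕ) : 0 ≤ gainSummand θ n i u j := by
  by_cases hj : j ∈ Icc 1 (n - i)
  · rw [gainSummand_eq_of_mem hj]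
    exact kernel_mul_nonneg hθ0 hu _ (mem_Icc_add_of_mem_Icc_sub hj).1 _
      (mem_Icc_add_of_mem_Icc_sub hj).2
  · rw [gainSummand_eq_zero_of_notMem hj]

theorem gainSummand_le {M : ℝ} (hu : ∀ j ∈ Icc 1 n, 0 ≤ u j) (huM : ∀ j ∈ Icc 1 n, u j ≤ M)
    (i j : ℕ) : gainSummand θ n i u j ≤ |θ (i + j) j| * M * M := by
  by_cases hj : j ∈ Icc 1 (n - i)
  · obtain ⟨hij, hj'⟩ := mem_Icc_add_of_mem_Icc_sub hj
    rw [gainSummand_eq_of_mem hj, mul_assoc, mul_assoc]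
    have huu : u (i + j) * u j ≤ M * M :=
      mul_le_mul (huM _ hij) (huM _ hj') (hu _ hj') ((hu _ hij).trans (huM _ hij))
    exact (mul_le_mul_of_nonneg_right (le_abs_self _) (mul_nonneg (hu _ hij) (hu _ hj'))).trans
      (mul_le_mul_of_nonneg_left huu (abs_nonneg _))
  · rw [gainSummand_eq_zero_of_notMem hj, mul_assoc]
    exact mul_nonneg (abs_nonneg _) (mul_self_nonneg M)

theorem rbkDissipation_nonneg (hθ_symm : ∀ i j : ℕ, 1 ≤ i → 1 ≤ j → θ i j = θ j i)
    (hθ0 : ∀ i j : ℕ, 1 ≤ i → 1 ≤ j → 0 ≤ θ i j) (hu : ∀ j ∈ Icc 1 n, 0 ≤ u j) :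
    0 ≤ rbkDissipation θ n u := by
  refine (sum_nonneg fun p hp => ?_).trans (sum_strictLowerPairs_le_rbkDissipation hθ_symm hθ0 hu)
  exact mul_nonneg (by positivity) (kernel_mul_nonneg hθ0 hu _
    (mem_Icc_of_mem_strictLowerPairs hp).1 _ (mem_Icc_of_mem_strictLowerPairs hp).2)

theorem tsum_natCast_mul_ofReal_gainSummand_le
    (hθ_symm : ∀ i j : ℕ, 1 ≤ i → 1 ≤ j → θ i j = θ j i)
    (hθ0 : ∀ i j : ℕ, 1 ≤ i → 1 ≤ j → 0 ≤ θ i j) (hu : ∀ j ∈ Icc 1 n, 0 ≤ u j)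
    {i : ℕ} (hi : 1 ≤ i) :
    ∑' j : ℕ, (j : ℝ≥0∞) * ENNReal.ofReal (gainSummand θ n i u j)
      ≤ ENNReal.ofReal (rbkDissipation θ n u) := by
  rw [tsum_eq_sum (s := Icc 1 (n - i)) fun j hj => by
    rw [gainSummand_eq_zero_of_notMem hj, ENNReal.ofReal_zero, mul_zero]]
  calc ∑ j ∈ Icc 1 (n - i), (j : ℝ≥0∞) * ENNReal.ofReal (gainSummand θ n i u j)
      = ENNReal.ofReal (∑ j ∈ Icc 1 (n - i), (j : ℝ) * gainSummand θ n i u j) := by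
        rw [ENNReal.ofReal_sum_of_nonneg fun j _ =>
          mul_nonneg (Nat.cast_nonneg j) (gainSummand_nonneg hθ0 hu i j)]
        refine sum_congr rfl fun j _ => ?_
        rw [ENNReal.ofReal_mul (Nat.cast_nonneg j), ENNReal.ofReal_natCast]
    _ ≤ ENNReal.ofReal (rbkDissipation θ n u) := by
        refine ENNReal.ofReal_le_ofReal ?_
        refine le_trans ?_ ((sum_shift_le_sum_strictLowerPairs (w := fun l j => θ l j * u l * u j)
          (kernel_mul_nonneg hθ0 hu) hi).trans
            (sum_strictLowerPairs_le_rbkDissipation hθ_symm hθ0 hu))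
        refine sum_le_sum fun j hj => ?_
        rw [gainSummand_eq_of_mem hj]
        exact mul_le_mul_of_nonneg_right (by linarith [(Nat.cast_nonneg j : (0 : ℝ) ≤ j)])
          (kernel_mul_nonneg hθ0 hu _ (mem_Icc_add_of_mem_Icc_sub hj).1 _
            (mem_Icc_add_of_mem_Icc_sub hj).2)

end Moments

theorem tendsto_gainSummand {θ : ℕ → ℕ → ℝ} {nk : ℕ → ℕ} (hnk : Tendsto nk atTop atTop)
    {u : ℕ → ℕ → ℝ} {v : ℕ → ℝ} (huv : ∀ j : ℕ, 1 ≤ j → Tendsto (fun k => u k j) atTop (𝓝 (v j)))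
    (i j : ℕ) :
    Tendsto (fun k => gainSummand θ (nk k) i (u k) j) atTop
      (𝓝 (if 1 ≤ j then θ (i + j) j * v (i + j) * v j else 0)) := by
  by_cases hj : 1 ≤ j
  · rw [if_pos hj]
    refine Tendsto.congr' ?_ ((tendsto_const_nhds.mul (huv (i + j) (by omega))).mul (huv j hj))
    filter_upwards [hnk.eventually_ge_atTop (i + j)] with k hk
    exact (gainSummand_eq_of_mem (mem_Icc.2 ⟨hj, by omega⟩)).symm
  · rw [if_neg hj]
    refine tendsto_const_nhds.congr fun k => ?_
    rw [gainSummand_eq_zero_of_notMem fun h => hj (mem_Icc.1 h).1]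

namespace IsTruncRBKOn

variable {θ : ℕ → ℕ → ℝ} {n : ℕ} {I : Set ℝ} {f : ℕ → ℝ → ℝ}

theorem continuousOn (hf : IsTruncRBKOn θ n I f) {j : ℕ} (hj : j ∈ Icc 1 n) :
    ContinuousOn (f j) I :=
  fun t ht => (hf j hj t ht).continuousWithinAt

theorem continuousOn_kernel_mul (hf : IsTruncRBKOn θ n I f) {l j : ℕ} (hl : l ∈ Icc 1 n)
    (hj : j ∈ Icc 1 n) : ContinuousOn (fun t => θ l j * f l t * f j t) I :=
  (continuousOn_const.mul (hf.continuousOn hl)).mul (hf.continuousOn hj)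

theorem continuousOn_gainSummand (hf : IsTruncRBKOn θ n I f) (i j : ℕ) :
    ContinuousOn (fun t => gainSummand θ n i (f · t) j) I := by
  by_cases hj : j ∈ Icc 1 (n - i)
  · simp only [gainSummand_eq_of_mem hj]
    exact hf.continuousOn_kernel_mul (mem_Icc_add_of_mem_Icc_sub hj).1
      (mem_Icc_add_of_mem_Icc_sub hj).2
  · simp only [gainSummand_eq_zero_of_notMem hj]
    exact continuousOn_const

theorem continuousOn_rbkDissipation (hf : IsTruncRBKOn θ n I f) :
    ContinuousOn (fun t => rbkDissipation θ n (f · t)) I :=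
  continuousOn_finsetSum _ fun _ hl => continuousOn_const.mul <|
    (continuousOn_finsetSum _ fun _ hj => hf.continuousOn_kernel_mul hl hj).sub
      (continuousOn_finsetSum _ fun _ hj => hf.continuousOn_kernel_mul
        (mem_Icc_add_of_mem_Icc_sub hj).1 (mem_Icc_add_of_mem_Icc_sub hj).2)

theorem continuousOn_rbkMass (hf : IsTruncRBKOn θ n I f) :
    ContinuousOn (fun t => rbkMass n (f · t)) I :=
  continuousOn_finsetSum _ fun _ hl => continuousOn_const.mul (hf.continuousOn hl)

theorem hasDerivWithinAt_rbkMass (hf : IsTruncRBKOn θ n I f) {t : ℝ} (ht : t ∈ I) :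
    HasDerivWithinAt (fun s => rbkMass n (f · s)) (-rbkDissipation θ n (f · t)) I t := by
  refine (HasDerivWithinAt.fun_sum fun l hl => (hf l hl t ht).const_mul (l : ℝ)).congr_deriv ?_
  rw [rbkDissipation, ← sum_neg_distrib]
  exact sum_congr rfl fun l _ => by ring

theorem integral_rbkDissipation (hf : IsTruncRBKOn θ n (Set.Ici 0) f) {t : ℝ} (ht : 0 ≤ t) :
    ∫ s in (0 : ℝ)..t, rbkDissipation θ n (f · s) = rbkMass n (f · 0) - rbkMass n (f · t) := by
  have hcont := hf.continuousOn_rbkDissipation.mono fun s (hs : s ∈ Set.Icc 0 t) => hs.1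
  have hFTC := intervalIntegral.integral_eq_sub_of_hasDeriv_right_of_le
    (f := fun s => rbkMass n (f · s)) ht (hf.continuousOn_rbkMass.mono fun s hs => hs.1)
    (fun s hs => (hf.hasDerivWithinAt_rbkMass (le_of_lt hs.1)).mono
      fun r hr => le_of_lt (hs.1.trans hr))
    (hcont.neg.intervalIntegrable_of_Icc ht)
  rw [intervalIntegral.integral_neg] at hFTC
  linarith

theorem integral_rbkDissipation_le (hf : IsTruncRBKOn θ n (Set.Ici 0) f)
    (hf0 : ∀ j ∈ Icc 1 n, ∀ t ∈ Set.Ici (0 : ℝ), 0 ≤ f j t) {T : ℝ} (hT : 0 ≤ T) :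
    ∫ s in (0 : ℝ)..T, rbkDissipation θ n (f · s) ≤ rbkMass n (f · 0) := by
  rw [hf.integral_rbkDissipation hT, sub_le_self_iff]
  exact rbkMass_nonneg fun j hj => hf0 j hj T hT

theorem le_rbkMass_zero (hf : IsTruncRBKOn θ n (Set.Ici 0) f)
    (hθ_symm : ∀ i j : ℕ, 1 ≤ i → 1 ≤ j → θ i j = θ j i)
    (hθ0 : ∀ i j : ℕ, 1 ≤ i → 1 ≤ j → 0 ≤ θ i j)
    (hf0 : ∀ j ∈ Icc 1 n, ∀ t ∈ Set.Ici (0 : ℝ), 0 ≤ f j t) {j : ℕ} (hj : j ∈ Icc 1 n)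
    {t : ℝ} (ht : 0 ≤ t) : f j t ≤ rbkMass n (f · 0) := by
  have hdiss : 0 ≤ ∫ s in (0 : ℝ)..t, rbkDissipation θ n (f · s) :=
    intervalIntegral.integral_nonneg ht fun s hs =>
      rbkDissipation_nonneg hθ_symm hθ0 fun l hl => hf0 l hl s hs.1
  rw [hf.integral_rbkDissipation ht, sub_nonneg] at hdiss
  exact (le_rbkMass (fun l hl => hf0 l hl t ht) hj).trans hdiss

theorem lintegral_gain_moment_le (hf : IsTruncRBKOn θ n (Set.Ici 0) f)
    (hθ_symm : ∀ i j : ℕ, 1 ≤ i → 1 ≤ j → θ i j = θ j i)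
    (hθ0 : ∀ i j : ℕ, 1 ≤ i → 1 ≤ j → 0 ≤ θ i j)
    (hf0 : ∀ j ∈ Icc 1 n, ∀ t ∈ Set.Ici (0 : ℝ), 0 ≤ f j t) {i : ℕ} (hi : 1 ≤ i)
    {T : ℝ} (hT : 0 ≤ T) :
    ∫⁻ t in Set.Ioc 0 T, ∑' j : ℕ, (j : ℝ≥0∞) * ENNReal.ofReal (gainSummand θ n i (f · t) j)
      ≤ ENNReal.ofReal (rbkMass n (f · 0)) := by
  have hint : IntegrableOn (fun t => rbkDissipation θ n (f · t)) (Set.Ioc 0 T) :=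
    ((hf.continuousOn_rbkDissipation.mono Set.Icc_subset_Ici_self).integrableOn_Icc).mono_set
      Set.Ioc_subset_Icc_self
  calc _ ≤ ∫⁻ t in Set.Ioc 0 T, ENNReal.ofReal (rbkDissipation θ n (f · t)) :=
        setLIntegral_mono' measurableSet_Ioc fun t ht =>
          tsum_natCast_mul_ofReal_gainSummand_le hθ_symm hθ0 (fun j hj => hf0 j hj t ht.1.le) hi
    _ = ENNReal.ofReal (∫ t in Set.Ioc 0 T, rbkDissipation θ n (f · t)) :=
        (ofReal_integral_eq_lintegral_ofReal hint (ae_restrict_of_forall_mem measurableSet_Ioc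
          fun t ht => rbkDissipation_nonneg hθ_symm hθ0 fun j hj => hf0 j hj t ht.1.le)).symm
    _ ≤ ENNReal.ofReal (rbkMass n (f · 0)) := by
        rw [← intervalIntegral.integral_of_le hT]
        exact ENNReal.ofReal_le_ofReal (hf.integral_rbkDissipation_le hf0 hT)

end IsTruncRBKOn

theorem truncRBK_gain_term_convergence_general
    (θ : ℕ → ℕ → ℝ) (ω : ℕ → ℝ) (κ : ℕ → ℕ → ℝ)
    (hθ_symm : ∀ i j : ℕ, 1 ≤ i → 1 ≤ j → θ i j = θ j i)
    -- (K1)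
    (hK1 : ∀ i j : ℕ, 1 ≤ i → 1 ≤ j → θ i j = ω i * ω j + κ i j)
    (hω_nonneg : ∀ i : ℕ, 1 ≤ i → 0 ≤ ω i)
    (hκ_nonneg : ∀ i j : ℕ, 1 ≤ i → 1 ≤ j → 0 ≤ κ i j)
    -- f^{in} ∈ X₁⁺
    (fin : ℕ → ℝ) (hfin_nonneg : ∀ i : ℕ, 1 ≤ i → 0 ≤ fin i)
    (hfin_summable : Summable (fun i : ℕ => (i : ℝ) * fin i))
    -- the sequence of truncated solutions
    (nk : ℕ → ℕ) (hnk : Tendsto nk atTop atTop)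
    (F : ℕ → ℕ → ℝ → ℝ)
    (hF : ∀ k : ℕ, IsTruncRBKOn θ (nk k) (Set.Ici 0) (F k))
    (hFinit : ∀ k : ℕ, ∀ i ∈ Finset.Icc 1 (nk k), F k i 0 = fin i)
    (hF_nonneg : ∀ k : ℕ, ∀ i ∈ Finset.Icc 1 (nk k), ∀ t ∈ Set.Ici (0:ℝ), 0 ≤ F k i t)
    -- pointwise convergence to a nonnegative limit f
    (f : ℕ → ℝ → ℝ)
    (hconv : ∀ i : ℕ, 1 ≤ i → ∀ t ∈ Set.Ici (0:ℝ),
      Tendsto (fun k => F k i t) atTop (nhds (f i t)))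
    (i : ℕ) (hi : 1 ≤ i) (T : ℝ) (hT : 0 < T) :
    Tendsto
      (fun k => ∫ s in (0:ℝ)..T,
        |(∑ j ∈ Finset.Icc 1 (nk k - i), θ (i + j) j * F k (i + j) s * F k j s)
          - ∑' j : ℕ, if 1 ≤ j then θ (i + j) j * f (i + j) s * f j s else 0|)
      atTop (nhds 0) := by
  have hθ0 : ∀ a b : ℕ, 1 ≤ a → 1 ≤ b → 0 ≤ θ a b := fun a b ha hb => by
    rw [hK1 a b ha hb]
    exact add_nonneg (mul_nonneg (hω_nonneg a ha) (hω_nonneg b hb)) (hκ_nonneg a b ha hb)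
  set M := ∑' l : ℕ, (l : ℝ) * fin l
  have hM : ∀ k, rbkMass (nk k) (F k · 0) ≤ M := fun k =>
    rbkMass_le_tsum (hFinit k) hfin_nonneg hfin_summable
  have hFM : ∀ k, ∀ j ∈ Icc 1 (nk k), ∀ t ∈ Set.Ioc 0 T, F k j t ≤ M := fun k j hj t ht =>
    ((hF k).le_rbkMass_zero hθ_symm hθ0 (hF_nonneg k) hj ht.1.le).trans (hM k)
  have key := tendsto_integral_abs_tsum_sub_tsum (μ := volume.restrict (Set.Ioc 0 T))
    (g := fun k j t => gainSummand θ (nk k) i (F k · t) j)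
    (G := fun j t => if 1 ≤ j then θ (i + j) j * f (i + j) t * f j t else 0) ofReal_ne_top
    (fun k j => ((hF k).continuousOn_gainSummand i j).mono (fun s hs => hs.1.le)
      |>.aestronglyMeasurable measurableSet_Ioc)
    (fun k j => ae_restrict_of_forall_mem measurableSet_Ioc fun t ht =>
      gainSummand_nonneg hθ0 (fun l hl => hF_nonneg k l hl t ht.1.le) i j)
    (fun j => ⟨|θ (i + j) j| * M * M, fun k => ae_restrict_of_forall_mem measurableSet_Ioc
      fun t ht => gainSummand_le (fun l hl => hF_nonneg k l hl t ht.1.le)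
        (fun l hl => hFM k l hl t ht) i j⟩)
    (fun j => ae_restrict_of_forall_mem measurableSet_Ioc fun t ht =>
      tendsto_gainSummand hnk (fun l hl => hconv l hl t ht.1.le) i j)
    (fun k => ((hF k).lintegral_gain_moment_le hθ_symm hθ0 (hF_nonneg k) hi hT.le).trans
      (ENNReal.ofReal_le_ofReal (hM k)))
  simpa only [intervalIntegral.integral_of_le hT.le, tsum_gainSummand] using key

/-- Under (K1) and (K3), for `f^{in} ∈ X₁⁺` and a sequence of truncated
solutions `f^{n_k}` (with `n_k → ∞`) converging pointwise to some nonnegative `f`, the gain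
term converges in `L¹(0,T)`:
`∑_{j=1}^{n_k−i} θ_{i+j,j} f_{i+j}^{n_k} f_j^{n_k} → ∑_{j≥1} θ_{i+j,j} f_{i+j} f_j`. -/
theorem truncRBK_gain_term_convergence
    (θ : ℕ → ℕ → ℝ) (ω : ℕ → ℝ) (κ : ℕ → ℕ → ℝ)
    (hθ_symm : ∀ i j : ℕ, 1 ≤ i → 1 ≤ j → θ i j = θ j i)
    -- (K1)
    (hK1 : ∀ i j : ℕ, 1 ≤ i → 1 ≤ j → θ i j = ω i * ω j + κ i j)
    (hω_nonneg : ∀ i : ℕ, 1 ≤ i → 0 ≤ ω i)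
    (hκ_nonneg : ∀ i j : ℕ, 1 ≤ i → 1 ≤ j → 0 ≤ κ i j)
    (hκ_symm : ∀ i j : ℕ, 1 ≤ i → 1 ≤ j → κ i j = κ j i)
    -- (K3)
    (R A : ℝ) (hR : 0 < R) (hA : 0 < A)
    (hωR : ∀ i : ℕ, 1 ≤ i → R * i ≤ ω i)
    (hκA : ∀ i j : ℕ, 1 ≤ i → 1 ≤ j → κ i j ≤ A * (ω i * ω j))
    -- f^{in} ∈ X₁⁺
    (fin : ℕ → ℝ) (hfin_nonneg : ∀ i : ℕ, 1 ≤ i → 0 ≤ fin i)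
    (hfin_summable : Summable (fun i : ℕ => (i : ℝ) * fin i))
    -- the sequence of truncated solutions
    (nk : ℕ → ℕ) (hnk : Tendsto nk atTop atTop)
    (F : ℕ → ℕ → ℝ → ℝ)
    (hF : ∀ k : ℕ, IsTruncRBKOn θ (nk k) (Set.Ici 0) (F k))
    (hFinit : ∀ k : ℕ, ∀ i ∈ Finset.Icc 1 (nk k), F k i 0 = fin i)
    (hF_nonneg : ∀ k : ℕ, ∀ i ∈ Finset.Icc 1 (nk k), ∀ t ∈ Set.Ici (0:ℝ), 0 ≤ F k i t)
    -- pointwise convergence to a nonnegative limit f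
    (f : ℕ → ℝ → ℝ)
    (hf_nonneg : ∀ i : ℕ, 1 ≤ i → ∀ t ∈ Set.Ici (0:ℝ), 0 ≤ f i t)
    (hconv : ∀ i : ℕ, 1 ≤ i → ∀ t ∈ Set.Ici (0:ℝ),
      Tendsto (fun k => F k i t) atTop (nhds (f i t)))
    (i : ℕ) (hi : 1 ≤ i) (T : ℝ) (hT : 0 < T) :
    Tendsto
      (fun k => ∫ s in (0:ℝ)..T,
        |(∑ j ∈ Finset.Icc 1 (nk k - i), θ (i + j) j * F k (i + j) s * F k j s)
          - ∑' j : ℕ, if 1 ≤ j then θ (i + j) j * f (i + j) s * f j s else 0|)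
      atTop (nhds 0) :=
  truncRBK_gain_term_convergence_general θ ω κ hθ_symm hK1 hω_nonneg hκ_nonneg fin hfin_nonneg
    hfin_summable nk hnk F hF hFinit hF_nonneg f hconv i hi T hT
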